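/- Consider equation (5.12) with f₁(w) = w, b = 1 and d = 0. Then for every K ∈ (0,1) and every τ₀ ∈ ℝ, the function w(τ) = √(1 − K² sin²(τ − τ₀)) − K cos(τ − τ₀) is a positive periodic solution of (5.12) with least period 2π; conversely, every positive nonconstant periodic solution of (5.12) is of this form. In particular, the period function of the positive periodic solutions is constant, equal to 2π. -/

import Mathlib

open Real Set Filter Topology

noncomputable section

/-- A solution of equation (5.12) on a set `I`, with derivative `w'`:
`(d/dτ)[w'/√(w² + w'²)] − b w/√(w² + w'²) + f₁(w) − d·sgn(w) = 0`,
where `(w, w') ≠ (0, 0)` everywhere on `I`. -/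
def Sol512On (b d : ℝ) (f₁ w w' : ℝ → ℝ) (I : Set ℝ) : Prop :=
  ContinuousOn w' I ∧
  (∀ τ ∈ I, HasDerivWithinAt w (w' τ) I τ) ∧
  (∀ τ ∈ I, (w τ, w' τ) ≠ (0, 0)) ∧
  ∃ F' : ℝ → ℝ,
    (∀ τ ∈ I, HasDerivWithinAt
      (fun s => w' s / Real.sqrt (w s ^ 2 + w' s ^ 2)) (F' τ) I τ) ∧
    (∀ τ ∈ I, F' τ - b * w τ / Real.sqrt (w τ ^ 2 + w' τ ^ 2) + f₁ (w τ)
      - d * Real.sign (w τ) = 0)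

/-- Conditions (3.8) on the nonlinearity `f₁`: odd, continuous on `[0,∞)`,
`f₁(s)/s → 1` as `s → 0⁺`, `f₁(s) → ∞` as `s → ∞`, strictly increasing on `(0,∞)`. -/
def Cond38 (f₁ : ℝ → ℝ) : Prop :=
  (∀ s, f₁ (-s) = -f₁ s) ∧ ContinuousOn f₁ (Ici 0) ∧
  Tendsto (fun s => f₁ s / s) (𝓝[>] (0:ℝ)) (𝓝 1) ∧
  Tendsto f₁ atTop atTop ∧
  StrictMonoOn f₁ (Ioi 0)

/-- A function taking both positive and negative values. -/
def SignChanging (ω : ℝ → ℝ) : Prop := (∃ σ, 0 < ω σ) ∧ (∃ σ, ω σ < 0)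

/-- `T` is the least period of `ω`. -/
def IsLeastPeriod (ω : ℝ → ℝ) (T : ℝ) : Prop :=
  0 < T ∧ Function.Periodic ω T ∧ ∀ T', 0 < T' → Function.Periodic ω T' → T ≤ T'

/-!
Writing `(w, w') = ρ (v, u)` with `u² + v² = 1` and `v > 0`, equation (5.12) with `f₁(w) = w`,
`b = 1`, `d = 0` says `u' = v - w`; differentiating `v = √(1 - u²)` then gives `(v - w)' = -u`.
So `(v - w, u)` rotates uniformly on a circle of radius `K` about the origin,
`(v - w, u) = K (cos (τ - τ₀), sin (τ - τ₀))`, and `w = √(1 - u²) - (v - w)` is the explicit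
solution. Positivity of `w` at `τ₀` forces `K < 1`, and `w(τ₀ + T) = w(τ₀)` forces `cos T = 1`.
-/

def explicitSolution (K τ₀ : ℝ) (τ : ℝ) : ℝ :=
  √(1 - K ^ 2 * sin (τ - τ₀) ^ 2) - K * cos (τ - τ₀)

lemma one_sub_sq_mul_sin_sq_pos {K : ℝ} (hK : K ^ 2 < 1) (θ : ℝ) :
    0 < 1 - K ^ 2 * sin θ ^ 2 := by
  nlinarith [sin_sq_le_one θ, sq_nonneg K]

lemma mul_cos_lt_sqrt_one_sub_sq_mul_sin_sq {K : ℝ} (hK : K ^ 2 < 1) (θ : ℝ) :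
    K * cos θ < √(1 - K ^ 2 * sin θ ^ 2) :=
  lt_sqrt_of_sq_lt (by nlinarith [sin_sq_add_cos_sq θ])

section explicitSolution

variable {K τ₀ : ℝ}

lemma explicitSolution_pos (hK : K ^ 2 < 1) (τ : ℝ) : 0 < explicitSolution K τ₀ τ :=
  sub_pos.2 (mul_cos_lt_sqrt_one_sub_sq_mul_sin_sq hK _)

lemma explicitSolution_self : explicitSolution K τ₀ τ₀ = 1 - K := by
  simp [explicitSolution]

lemma explicitSolution_zero_left : explicitSolution 0 τ₀ = fun _ => 1 := by
  funext τ
  simp [explicitSolution]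

lemma explicitSolution_periodic : Function.Periodic (explicitSolution K τ₀) (2 * π) := by
  intro τ
  simp only [explicitSolution, add_sub_right_comm τ, sin_add_two_pi, cos_add_two_pi]

lemma cos_eq_one_of_explicitSolution_eq (hK₀ : K ≠ 0) (hK : K ^ 2 < 1) {T : ℝ}
    (hT : explicitSolution K τ₀ (τ₀ + T) = explicitSolution K τ₀ τ₀) : cos T = 1 := by
  rw [explicitSolution_self, explicitSolution, add_sub_cancel_left] at hT
  have hsqrt : √(1 - K ^ 2 * sin T ^ 2) = 1 - K + K * cos T := by linarith
  have hsq : 1 - K ^ 2 * sin T ^ 2 = (1 - K + K * cos T) ^ 2 := by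
    rw [← hsqrt, sq_sqrt (one_sub_sq_mul_sin_sq_pos hK T).le]
  have hK₁ : 1 - K ≠ 0 := by
    intro h
    nlinarith
  have key : 2 * K * (1 - K) * (cos T - 1) = 0 := by
    linear_combination -hsq - K ^ 2 * sin_sq_add_cos_sq T
  simpa [hK₀, hK₁, sub_eq_zero] using key

lemma isLeastPeriod_explicitSolution (hK₀ : K ≠ 0) (hK : K ^ 2 < 1) :
    IsLeastPeriod (explicitSolution K τ₀) (2 * π) := by
  refine ⟨by positivity, explicitSolution_periodic, fun T hT hper => ?_⟩
  by_contra! hlt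
  have hcos := cos_eq_one_of_explicitSolution_eq hK₀ hK (hper τ₀)
  have := (cos_eq_one_iff_of_lt_of_lt (by linarith [pi_pos]) hlt).1 hcos
  linarith

lemma hasDerivAt_explicitSolution (hK : K ^ 2 < 1) (τ : ℝ) :
    HasDerivAt (explicitSolution K τ₀)
      (K * sin (τ - τ₀) * explicitSolution K τ₀ τ / √(1 - K ^ 2 * sin (τ - τ₀) ^ 2)) τ := by
  have hS := one_sub_sq_mul_sin_sq_pos hK (τ - τ₀)
  have hθ : HasDerivAt (fun s => s - τ₀) 1 τ := (hasDerivAt_id τ).sub_const τ₀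
  have hsqrt := (((hθ.sin.fun_pow 2).const_mul (K ^ 2)).const_sub 1).sqrt hS.ne'
  refine hsqrt.sub (hθ.cos.const_mul K) |>.congr_deriv ?_
  have := (sqrt_pos.2 hS).ne'
  simp only [explicitSolution]
  field_simp
  ring

lemma sol512On_explicitSolution (hK : K ^ 2 < 1) :
    Sol512On 1 0 (fun s => s) (explicitSolution K τ₀)
      (fun τ => K * sin (τ - τ₀) * explicitSolution K τ₀ τ / √(1 - K ^ 2 * sin (τ - τ₀) ^ 2))
      univ := by
  have hA : ∀ τ, 0 < 1 - K ^ 2 * sin (τ - τ₀) ^ 2 := fun τ => one_sub_sq_mul_sin_sq_pos hK _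
  have hS : ∀ τ, 0 < √(1 - K ^ 2 * sin (τ - τ₀) ^ 2) := fun τ => sqrt_pos.2 (hA τ)
  have hw : ∀ τ, 0 < explicitSolution K τ₀ τ := explicitSolution_pos hK
  have hnorm : ∀ τ, √(explicitSolution K τ₀ τ ^ 2 +
      (K * sin (τ - τ₀) * explicitSolution K τ₀ τ / √(1 - K ^ 2 * sin (τ - τ₀) ^ 2)) ^ 2)
      = explicitSolution K τ₀ τ / √(1 - K ^ 2 * sin (τ - τ₀) ^ 2) := by
    intro τ
    rw [sqrt_eq_iff_mul_self_eq_of_pos (div_pos (hw τ) (hS τ))]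
    have := (hS τ).ne'
    field_simp
    rw [sq_sqrt (hA τ).le]
    ring
  have hquot : (fun τ => K * sin (τ - τ₀) * explicitSolution K τ₀ τ /
      √(1 - K ^ 2 * sin (τ - τ₀) ^ 2) / √(explicitSolution K τ₀ τ ^ 2 +
      (K * sin (τ - τ₀) * explicitSolution K τ₀ τ / √(1 - K ^ 2 * sin (τ - τ₀) ^ 2)) ^ 2))
      = fun τ => K * sin (τ - τ₀) := by
    funext τ
    have := (hS τ).ne'
    have := (hw τ).ne'
    rw [hnorm]
    field_simp
  have hw_cont : Continuous (explicitSolution K τ₀) :=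
    continuous_iff_continuousAt.2 fun τ => (hasDerivAt_explicitSolution hK τ).continuousAt
  refine ⟨(Continuous.div (by fun_prop) (by fun_prop) fun τ => (hS τ).ne').continuousOn,
    fun τ _ => (hasDerivAt_explicitSolution hK τ).hasDerivWithinAt,
    fun τ _ => by simp [(hw τ).ne'], fun τ => K * cos (τ - τ₀), fun τ _ => ?_, fun τ _ => ?_⟩
  · rw [hquot]
    exact ((hasDerivAt_id τ).sub_const τ₀).sin.const_mul K |>.hasDerivWithinAt.congr_deriv (by simp)
  · rw [hnorm, one_mul, div_div_cancel₀ (hw τ).ne', zero_mul, sub_zero, explicitSolution]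
    ring

end explicitSolution

lemma exists_eq_sqrt_mul_cos_sin (a b : ℝ) :
    ∃ θ, a = √(a ^ 2 + b ^ 2) * cos θ ∧ b = √(a ^ 2 + b ^ 2) * sin θ := by
  refine ⟨Complex.arg ⟨a, b⟩, ?_, ?_⟩
  · simpa [Complex.norm_eq_sqrt_sq_add_sq] using (Complex.norm_mul_cos_arg ⟨a, b⟩).symm
  · simpa [Complex.norm_eq_sqrt_sq_add_sq] using (Complex.norm_mul_sin_arg ⟨a, b⟩).symm

section Rotation

variable {x y : ℝ → ℝ}

lemma sq_add_sq_eq_of_hasDerivAt_rotation (hx : ∀ τ, HasDerivAt x (-y τ) τ)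
    (hy : ∀ τ, HasDerivAt y (x τ) τ) (τ σ : ℝ) :
    x τ ^ 2 + y τ ^ 2 = x σ ^ 2 + y σ ^ 2 := by
  have h : ∀ τ, HasDerivAt (fun s => x s ^ 2 + y s ^ 2) 0 τ := fun τ =>
    ((hx τ).fun_pow 2).add ((hy τ).fun_pow 2) |>.congr_deriv (by ring)
  exact is_const_of_deriv_eq_zero (fun τ => (h τ).differentiableAt) (fun τ => (h τ).deriv) τ σ

lemma exists_eq_cos_sin_of_hasDerivAt_rotation (hx : ∀ τ, HasDerivAt x (-y τ) τ)
    (hy : ∀ τ, HasDerivAt y (x τ) τ) :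
    ∃ K τ₀, 0 ≤ K ∧ ∀ τ, x τ = K * cos (τ - τ₀) ∧ y τ = K * sin (τ - τ₀) := by
  obtain ⟨τ₀, hcos, hsin⟩ := exists_eq_sqrt_mul_cos_sin (x 0) (-y 0)
  -- `(x, y)` minus the rotation through `(x 0, y 0)` is again a rotation, of energy `0`.
  set K := √(x 0 ^ 2 + (-y 0) ^ 2)
  refine ⟨K, τ₀, sqrt_nonneg _, fun τ => ?_⟩
  have hθ : ∀ τ, HasDerivAt (fun s => s - τ₀) 1 τ := fun τ => (hasDerivAt_id τ).sub_const τ₀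
  have h := sq_add_sq_eq_of_hasDerivAt_rotation
    (x := fun s => x s - K * cos (s - τ₀)) (y := fun s => y s - K * sin (s - τ₀))
    (fun τ => ((hx τ).sub ((hθ τ).cos.const_mul K)).congr_deriv (by ring))
    (fun τ => ((hy τ).sub ((hθ τ).sin.const_mul K)).congr_deriv (by ring)) τ 0
  simp only [zero_sub, cos_neg, sin_neg, ← hcos, mul_neg, ← hsin] at h
  constructor <;> nlinarith [sq_nonneg (x τ - K * cos (τ - τ₀)), sq_nonneg (y τ - K * sin (τ - τ₀))]

end Rotation

lemma HasDerivAt.sqrt_one_sub_sq {u : ℝ → ℝ} {u' τ : ℝ} (hu : HasDerivAt u u' τ)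
    (h : u τ ^ 2 < 1) :
    HasDerivAt (fun s => √(1 - u s ^ 2)) (-(u τ * u') / √(1 - u τ ^ 2)) τ := by
  refine ((hu.fun_pow 2).const_sub 1).sqrt (by linarith) |>.congr_deriv ?_
  have := (sqrt_pos.2 (sub_pos.2 h)).ne'
  field_simp
  ring

lemma Sol512On.exists_rotation {w w' : ℝ → ℝ} (hsol : Sol512On 1 0 (fun s => s) w w' univ)
    (hpos : ∀ τ, 0 < w τ) :
    ∃ g u : ℝ → ℝ, (∀ τ, HasDerivAt g (-u τ) τ) ∧ (∀ τ, HasDerivAt u (g τ) τ) ∧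
      ∀ τ, w τ = √(1 - u τ ^ 2) - g τ := by
  obtain ⟨-, hw', -, F', hF', heq⟩ := hsol
  set ρ := fun τ => √(w τ ^ 2 + w' τ ^ 2)
  have hρ : ∀ τ, 0 < ρ τ := fun τ => sqrt_pos.2 (by have := hpos τ; positivity)
  set u := fun τ => w' τ / ρ τ
  set v := fun τ => w τ / ρ τ
  have hv_pos : ∀ τ, 0 < v τ := fun τ => div_pos (hpos τ) (hρ τ)
  have hu_sq : ∀ τ, u τ ^ 2 = 1 - v τ ^ 2 := fun τ => by
    have hsum : 0 < w τ ^ 2 + w' τ ^ 2 := by have := hpos τ; positivity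
    simp only [u, v, ρ, div_pow, sq_sqrt hsum.le]
    field_simp
    ring
  have hv : ∀ τ, v τ = √(1 - u τ ^ 2) := fun τ => by
    rw [hu_sq, sub_sub_cancel, sqrt_sq (hv_pos τ).le]
  have hu : ∀ τ, HasDerivAt u (v τ - w τ) τ := fun τ => by
    refine (hF' τ trivial).hasDerivAt univ_mem |>.congr_deriv ?_
    have := heq τ trivial
    simp only [one_mul, zero_mul, sub_zero] at this
    simp only [v, ρ]
    linarith
  have hv' : ∀ τ, HasDerivAt v (-(u τ * (v τ - w τ)) / v τ) τ := fun τ => by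
    have h := (hu τ).sqrt_one_sub_sq (by nlinarith [hu_sq τ, hv_pos τ])
    rw [← hv] at h
    convert h using 1
    exact funext hv
  refine ⟨fun τ => v τ - w τ, u, fun τ => ?_, hu, fun τ => by rw [← hv]; ring⟩
  refine (hv' τ).sub ((hw' τ trivial).hasDerivAt univ_mem) |>.congr_deriv ?_
  have := (hρ τ).ne'
  have := (hpos τ).ne'
  simp only [u, v]
  field_simp
  ring

theorem statement18 :
    (∀ K ∈ Ioo (0:ℝ) 1, ∀ τ₀ : ℝ, ∃ w' : ℝ → ℝ,
      Sol512On 1 0 (fun s => s)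
        (fun τ => Real.sqrt (1 - K ^ 2 * Real.sin (τ - τ₀) ^ 2) - K * Real.cos (τ - τ₀))
        w' Set.univ ∧
      (∀ τ, 0 < Real.sqrt (1 - K ^ 2 * Real.sin (τ - τ₀) ^ 2) - K * Real.cos (τ - τ₀)) ∧
      IsLeastPeriod
        (fun τ => Real.sqrt (1 - K ^ 2 * Real.sin (τ - τ₀) ^ 2) - K * Real.cos (τ - τ₀))
        (2 * π)) ∧
    (∀ w w' : ℝ → ℝ, Sol512On 1 0 (fun s => s) w w' Set.univ →
      (∀ τ, 0 < w τ) → (∃ T, 0 < T ∧ Function.Periodic w T) →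
      (∃ σ₁ σ₂, w σ₁ ≠ w σ₂) →
      (∃ K ∈ Ioo (0:ℝ) 1, ∃ τ₀ : ℝ, ∀ τ,
        w τ = Real.sqrt (1 - K ^ 2 * Real.sin (τ - τ₀) ^ 2) - K * Real.cos (τ - τ₀)) ∧
      IsLeastPeriod w (2 * π)) := by
  refine ⟨fun K hK τ₀ => ?_, fun w w' hsol hpos _ hnc => ?_⟩
  · have hK2 : K ^ 2 < 1 := by nlinarith [hK.1, hK.2]
    exact ⟨_, sol512On_explicitSolution hK2, explicitSolution_pos hK2,
      isLeastPeriod_explicitSolution hK.1.ne' hK2⟩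
  · obtain ⟨g, u, hg, hu, hw⟩ := hsol.exists_rotation hpos
    obtain ⟨K, τ₀, hK₀, hgu⟩ := exists_eq_cos_sin_of_hasDerivAt_rotation hg hu
    obtain rfl : w = explicitSolution K τ₀ := funext fun τ => by
      rw [hw, (hgu τ).1, (hgu τ).2, explicitSolution, mul_pow]
    have hK₁ : K < 1 := by simpa [explicitSolution_self] using hpos τ₀
    have hK_ne : K ≠ 0 := by
      rintro rfl
      obtain ⟨σ₁, σ₂, h⟩ := hnc
      simp [explicitSolution_zero_left] at h
    exact ⟨⟨K, ⟨hK₀.lt_of_ne' hK_ne, hK₁⟩, τ₀, fun τ => rfl⟩,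
      isLeastPeriod_explicitSolution hK_ne (by nlinarith)⟩
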